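/- arXiv:1409.8611 — 5 statements merged into one kernel-verified Lean document; each statement's English description precedes it below -/
import Mathlib

section
/- Let V be a finite-dimensional vector space over a field, and let F', K', K be subspaces with K' ⊆ K and K + F' = V. Set X₁ = K' + F' and X₂ = K ∩ X₁. Then there exists a subspace U ⊆ K such that K = X₂ ⊕ U and V = X₁ ⊕ U (internal direct sums). -/
/-! A complement `U` of `K ⊓ X₁` inside `K` is automatically a complement of `X₁` in `V`:
`X₁ ⊓ U = (K ⊓ X₁) ⊓ U = ⊥` because `U ≤ K`, and `X₁ ⊔ U ≥ (K ⊓ X₁) ⊔ U ⊔ X₁ = K ⊔ X₁ = ⊤`.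
Relative complements exist in any complemented modular lattice, such as `Submodule 𝕜 V`. -/

theorem Codisjoint.exists_le_disjoint_sup_eq_isCompl {α : Type*} [Lattice α]
    [BoundedOrder α] [IsModularLattice α] [ComplementedLattice α] {a b : α}
    (h : Codisjoint a b) :
    ∃ u ≤ b, Disjoint (b ⊓ a) u ∧ (b ⊓ a) ⊔ u = b ∧ IsCompl a u := by
  obtain ⟨u, hdisj, hsup⟩ := IsModularLattice.exists_disjoint_and_sup_eq (inf_le_left : b ⊓ a ≤ b)
  have hub : u ≤ b := hsup ▸ le_sup_right
  have hinf : a ⊓ u = (b ⊓ a) ⊓ u := by rw [inf_comm b a, inf_assoc, inf_eq_right.mpr hub]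
  have hb : b ≤ a ⊔ u := hsup ▸ sup_le_sup_right inf_le_right u
  refine ⟨u, hub, hdisj, hsup, disjoint_iff.mpr (hinf ▸ hdisj.eq_bot), ?_⟩
  exact codisjoint_iff.mpr (top_le_iff.mp (h.eq_top ▸ sup_le le_sup_left hb))

theorem stmt_1_general (𝕜 V : Type*) [Field 𝕜] [AddCommGroup V] [Module 𝕜 V]
    (F' K' K : Submodule 𝕜 V) (hsum : K ⊔ F' = ⊤) :
    ∃ U : Submodule 𝕜 V, U ≤ K ∧
      (K ⊓ (K' ⊔ F')) ⊓ U = ⊥ ∧ (K ⊓ (K' ⊔ F')) ⊔ U = K ∧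
      (K' ⊔ F') ⊓ U = ⊥ ∧ (K' ⊔ F') ⊔ U = ⊤ := by
  have hcodisj : Codisjoint (K' ⊔ F') K :=
    (codisjoint_iff.mpr hsum).symm.mono_left le_sup_right
  obtain ⟨U, hUK, hdisj, hsup, hcompl⟩ := hcodisj.exists_le_disjoint_sup_eq_isCompl
  exact ⟨U, hUK, hdisj.eq_bot, hsup, hcompl.inf_eq_bot, hcompl.sup_eq_top⟩

/-- Let `V` be a finite-dimensional vector space over a field, subspaces `F'`, `K'`, `K`
with `K' ⊆ K` and `K + F' = V`. Set `X₁ = K' + F'`, `X₂ = K ∩ X₁`. Then there is a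
subspace `U ⊆ K` with `K = X₂ ⊕ U` and `V = X₁ ⊕ U` (internal direct sums). -/
theorem stmt_1 (𝕜 V : Type*) [Field 𝕜] [AddCommGroup V] [Module 𝕜 V]
    [FiniteDimensional 𝕜 V]
    (F' K' K : Submodule 𝕜 V) (hK'K : K' ≤ K) (hsum : K ⊔ F' = ⊤) :
    ∃ U : Submodule 𝕜 V, U ≤ K ∧
      (K ⊓ (K' ⊔ F')) ⊓ U = ⊥ ∧ (K ⊓ (K' ⊔ F')) ⊔ U = K ∧
      (K' ⊔ F') ⊓ U = ⊥ ∧ (K' ⊔ F') ⊔ U = ⊤ :=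
  stmt_1_general 𝕜 V F' K' K hsum
end

section
/- Let A, B : X → Y be two surjective linear maps between finite-dimensional vector spaces over a field. Define increasing chains of subspaces of X by F₀ = 0, F_{k+1} = A⁻¹(B(F_k)) and G₀ = 0, G_{k+1} = B⁻¹(A(G_k)). Then both chains stabilize, and their stable values coincide: there exists N such that F_N = F_{N+1}, G_N = G_{N+1}, and F_N = G_N. Moreover ker A ⊆ F_N and ker B ⊆ F_N. -/
/-!
Both chains are iterates from `0` of the monotone maps `S ↦ A⁻¹(B S)` and `S ↦ B⁻¹(A S)`, so
they increase, stabilize in finite dimension, and stay below every fixed point of their map.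
The two maps have the same fixed points: if `A⁻¹(B S) = S` then `ker A ≤ S` and `A S = B S`, so
`dim S - dim (ker B ⊓ S) = dim (B S) = dim (A S) = dim S - dim ker A`; since `A` and `B` are
both onto `Y`, `dim ker A = dim ker B`, which forces `ker B ≤ S` and
`B⁻¹(A S) = B⁻¹(B S) = S + ker B = S`.
Hence each stable value lies below the other.
-/

open Module Submodule LinearMap

section IterationFromBot

variable {α : Type*} [PartialOrder α] [OrderBot α] {f : α → α} {u : ℕ → α}

theorem monotone_of_succ_eq_map (hf : Monotone f) (h0 : u 0 = ⊥)
    (hs : ∀ k, u (k + 1) = f (u k)) : Monotone u :=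
  monotone_nat_of_le_succ fun n =>
    hf.seq_le_seq n (by simp [h0]) (fun k _ => (hs k).le) (fun k _ => (hs (k + 1)).ge)

theorem le_of_succ_eq_map (hf : Monotone f) (h0 : u 0 = ⊥) (hs : ∀ k, u (k + 1) = f (u k))
    {p : α} (hp : f p ≤ p) (n : ℕ) : u n ≤ p :=
  hf.seq_le_seq (y := fun _ => p) n (by simp [h0]) (fun k _ => (hs k).le) (fun _ _ => hp)

theorem exists_stable_of_succ_eq_map [WellFoundedGT α] (hf : Monotone f) (h0 : u 0 = ⊥)
    (hs : ∀ k, u (k + 1) = f (u k)) : ∃ N, (∀ k, N ≤ k → u k = u N) ∧ f (u N) = u N := by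
  obtain ⟨N, hN⟩ := WellFoundedGT.monotone_chain_condition ⟨u, monotone_of_succ_eq_map hf h0 hs⟩
  exact ⟨N, fun k hk => (hN k hk).symm, (hs N).symm.trans (hN (N + 1) N.le_succ).symm⟩

end IterationFromBot

section FixedPoints

variable {𝕜 X Y : Type*} [Field 𝕜] [AddCommGroup X] [Module 𝕜 X] [AddCommGroup Y] [Module 𝕜 Y]

theorem map_eq_of_comap_map_eq {A B : X →ₗ[𝕜] Y} (hA : Function.Surjective A)
    {S : Submodule 𝕜 X} (hS : (S.map B).comap A = S) : S.map A = S.map B := by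
  conv_lhs => rw [← hS]
  exact map_comap_eq_of_surjective hA _

variable [FiniteDimensional 𝕜 X]

theorem finrank_map_add_finrank_inf_ker (f : X →ₗ[𝕜] Y) (p : Submodule 𝕜 X) :
    finrank 𝕜 (p.map f) + finrank 𝕜 ↥(p ⊓ ker f) = finrank 𝕜 p := by
  rw [← map_comap_subtype, finrank_map_subtype_eq, ← ker_domRestrict, ← range_domRestrict]
  exact finrank_range_add_finrank_ker (f.domRestrict p)

theorem finrank_ker_eq_of_surjective {A B : X →ₗ[𝕜] Y} (hA : Function.Surjective A)
    (hB : Function.Surjective B) : finrank 𝕜 (ker A) = finrank 𝕜 (ker B) := by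
  have hA' := finrank_range_add_finrank_ker A
  have hB' := finrank_range_add_finrank_ker B
  rw [range_eq_top.mpr hA] at hA'
  rw [range_eq_top.mpr hB] at hB'
  omega

theorem ker_le_of_comap_map_eq {A B : X →ₗ[𝕜] Y} (hA : Function.Surjective A)
    (hB : Function.Surjective B) {S : Submodule 𝕜 X} (hS : (S.map B).comap A = S) :
    ker B ≤ S := by
  have hker : ker A ≤ S := hS ▸ ker_le_comap A
  have hdimA := finrank_map_add_finrank_inf_ker A S
  have hdimB := finrank_map_add_finrank_inf_ker B S
  rw [inf_eq_right.mpr hker, map_eq_of_comap_map_eq hA hS,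
    finrank_ker_eq_of_surjective hA hB] at hdimA
  have hinf : S ⊓ ker B = ker B := eq_of_le_of_finrank_eq inf_le_right (by omega)
  exact hinf ▸ inf_le_left

theorem comap_map_eq_of_comap_map_eq {A B : X →ₗ[𝕜] Y} (hA : Function.Surjective A)
    (hB : Function.Surjective B) {S : Submodule 𝕜 X} (hS : (S.map B).comap A = S) :
    (S.map A).comap B = S := by
  rw [map_eq_of_comap_map_eq hA hS, comap_map_eq,
    sup_eq_left.mpr (ker_le_of_comap_map_eq hA hB hS)]

end FixedPoints

theorem stmt_2_general (𝕜 X Y : Type*) [Field 𝕜] [AddCommGroup X] [Module 𝕜 X]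
    [AddCommGroup Y] [Module 𝕜 Y] [FiniteDimensional 𝕜 X]
    (A B : X →ₗ[𝕜] Y) (hA : Function.Surjective A) (hB : Function.Surjective B)
    (F G : ℕ → Submodule 𝕜 X)
    (hF0 : F 0 = ⊥) (hFs : ∀ k, F (k + 1) = Submodule.comap A (Submodule.map B (F k)))
    (hG0 : G 0 = ⊥) (hGs : ∀ k, G (k + 1) = Submodule.comap B (Submodule.map A (G k))) :
    ∃ N : ℕ, (∀ k, N ≤ k → F k = F N ∧ G k = G N) ∧ F N = G N ∧
      LinearMap.ker A ≤ F N ∧ LinearMap.ker B ≤ F N := by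
  have hmonoF : Monotone fun S : Submodule 𝕜 X => (S.map B).comap A :=
    fun _ _ h => comap_mono (map_mono h)
  have hmonoG : Monotone fun S : Submodule 𝕜 X => (S.map A).comap B :=
    fun _ _ h => comap_mono (map_mono h)
  obtain ⟨N₁, hF, hFfix⟩ := exists_stable_of_succ_eq_map hmonoF hF0 hFs
  obtain ⟨N₂, hG, hGfix⟩ := exists_stable_of_succ_eq_map hmonoG hG0 hGs
  have hGF : G N₂ ≤ F N₁ :=
    le_of_succ_eq_map hmonoG hG0 hGs (comap_map_eq_of_comap_map_eq hA hB hFfix).le N₂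
  have hFG : F N₁ ≤ G N₂ :=
    le_of_succ_eq_map hmonoF hF0 hFs (comap_map_eq_of_comap_map_eq hB hA hGfix).le N₁
  have hFN : F (max N₁ N₂) = F N₁ := hF _ (le_max_left _ _)
  have hGN : G (max N₁ N₂) = G N₂ := hG _ (le_max_right _ _)
  refine ⟨max N₁ N₂, fun k hk => ⟨?_, ?_⟩, ?_, ?_, ?_⟩
  · rw [hFN, hF k (le_of_max_le_left hk)]
  · rw [hGN, hG k (le_of_max_le_right hk)]
  · rw [hFN, hGN, le_antisymm hFG hGF]
  · exact hFN ▸ hFfix ▸ ker_le_comap A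
  · exact hFN ▸ ker_le_of_comap_map_eq hA hB hFfix

/-- Let `A, B : X → Y` be surjective linear maps between finite-dimensional vector spaces.
Define `F₀ = 0`, `F_{k+1} = A⁻¹(B(F_k))` and `G₀ = 0`, `G_{k+1} = B⁻¹(A(G_k))`.
Then both chains stabilize, their stable values coincide, and `ker A` and `ker B` are
contained in the stable value. -/
theorem stmt_2 (𝕜 X Y : Type*) [Field 𝕜] [AddCommGroup X] [Module 𝕜 X]
    [AddCommGroup Y] [Module 𝕜 Y] [FiniteDimensional 𝕜 X] [FiniteDimensional 𝕜 Y]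
    (A B : X →ₗ[𝕜] Y) (hA : Function.Surjective A) (hB : Function.Surjective B)
    (F G : ℕ → Submodule 𝕜 X)
    (hF0 : F 0 = ⊥) (hFs : ∀ k, F (k + 1) = Submodule.comap A (Submodule.map B (F k)))
    (hG0 : G 0 = ⊥) (hGs : ∀ k, G (k + 1) = Submodule.comap B (Submodule.map A (G k))) :
    ∃ N : ℕ, (∀ k, N ≤ k → F k = F N ∧ G k = G N) ∧ F N = G N ∧
      LinearMap.ker A ≤ F N ∧ LinearMap.ker B ≤ F N :=
  stmt_2_general 𝕜 X Y A B hA hB F G hF0 hFs hG0 hGs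
end

section
/- Let A, B : X → Y be surjective linear maps between finite-dimensional vector spaces over a field, with filtrations F₀ = 0, F_{k+1} = A⁻¹(B(F_k)) and G₀ = 0, G_{k+1} = B⁻¹(A(G_k)). For i, j ≥ 1 set M_{i,j} = (F_i ∩ G_j) / ((F_{i-1} ∩ G_j) + (F_i ∩ G_{j-1})). Then for all i ≥ 2 and j ≥ 1 there is a well-defined linear isomorphism M_{i,j} → M_{i-1,j+1} sending the class of x ∈ F_i ∩ G_j to the class of any y ∈ F_{i-1} ∩ G_{j+1} with B(y) = A(x); in particular such a y always exists, and the resulting map is independent of choices, linear, and bijective. -/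
/-!
Both `A(F_i ∩ G_j)` and `B(F_{i-1} ∩ G_{j+1})` equal `B(F_{i-1}) ∩ A(G_j)`, and likewise the
images of the two denominators agree. Since `ker A = F_1` and `ker B = G_1` lie in the
denominators, `A` and `B` identify `M_{i,j}` and `M_{i-1,j+1}` with one and the same
subquotient of `Y`, and the isomorphism is the composite of these identifications.
-/

/-- The subquotient `M_{i,j} = (F_i ∩ G_j) / ((F_{i-1} ∩ G_j) + (F_i ∩ G_{j-1}))`. -/
abbrev Mquot (𝕜 X : Type*) [Field 𝕜] [AddCommGroup X] [Module 𝕜 X]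
    (F G : ℕ → Submodule 𝕜 X) (i j : ℕ) :=
  ↥(F i ⊓ G j) ⧸
    Submodule.comap (F i ⊓ G j).subtype ((F (i - 1) ⊓ G j) ⊔ (F i ⊓ G (j - 1)))

namespace Submodule

theorem map_comap_inf {R M N : Type*} [Semiring R] [AddCommMonoid M] [Module R M]
    [AddCommMonoid N] [Module R N] (f : M →ₗ[R] N) (q : Submodule R N) (p : Submodule R M) :
    map f (comap f q ⊓ p) = q ⊓ map f p :=
  SetLike.coe_injective <| by
    simp only [map_coe, coe_inf, comap_coe, Set.image_preimage_inter]

variable {R M N : Type*} [Ring R] [AddCommGroup M] [Module R M] [AddCommGroup N] [Module R N]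

noncomputable def quotEquivMap (f : M →ₗ[R] N) {P Q : Submodule R M} (hQP : Q ≤ P)
    (hker : LinearMap.ker f ⊓ P ≤ Q) :
    (P ⧸ Q.comap P.subtype) ≃ₗ[R] (P.map f ⧸ (Q.map f).comap (P.map f).subtype) :=
  let g := ((Q.map f).comap (P.map f).subtype).mkQ ∘ₗ f.submoduleMap P
  have hg : Function.Surjective g :=
    (mkQ_surjective _).comp (f.submoduleMap_surjective P)
  have hkerg : Q.comap P.subtype = LinearMap.ker g := by
    ext ⟨x, hx⟩
    simp only [mem_comap, subtype_apply, LinearMap.mem_ker, g, LinearMap.comp_apply,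
      mkQ_apply, Quotient.mk_eq_zero, LinearMap.submoduleMap_coe_apply, mem_map]
    constructor
    · exact fun hxQ => ⟨x, hxQ, rfl⟩
    · rintro ⟨y, hyQ, hyx⟩
      have hxy : x - y ∈ LinearMap.ker f ⊓ P := ⟨by simp [hyx], sub_mem hx (hQP hyQ)⟩
      simpa using add_mem (hker hxy) hyQ
  (quotEquivOfEq _ _ hkerg).trans (g.quotKerEquivOfSurjective hg)

theorem quotEquivMap_mk (f : M →ₗ[R] N) {P Q : Submodule R M} (hQP : Q ≤ P)
    (hker : LinearMap.ker f ⊓ P ≤ Q) (x : P) :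
    quotEquivMap f hQP hker (Quotient.mk x) = Quotient.mk ⟨f x, mem_map_of_mem x.2⟩ :=
  rfl

section SubquotientEquiv

variable {f g : M →ₗ[R] N} {P Q P' Q' : Submodule R M} (hQP : Q ≤ P)
  (hker : LinearMap.ker f ⊓ P ≤ Q) (hQP' : Q' ≤ P') (hker' : LinearMap.ker g ⊓ P' ≤ Q')
  (hP : P.map f = P'.map g) (hQ : Q.map f = Q'.map g)

noncomputable def subquotientEquivOfMapEq :
    (P ⧸ Q.comap P.subtype) ≃ₗ[R] (P' ⧸ Q'.comap P'.subtype) :=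
  (quotEquivMap f hQP hker).trans <|
    (Quotient.equiv _ _ (LinearEquiv.ofEq _ _ hP) (by ext; simp [hQ])).trans
      (quotEquivMap g hQP' hker').symm

theorem subquotientEquivOfMapEq_mk {x y : M} (hx : x ∈ P) (hy : y ∈ P') (hxy : g y = f x) :
    subquotientEquivOfMapEq hQP hker hQP' hker' hP hQ (Quotient.mk ⟨x, hx⟩) =
      Quotient.mk ⟨y, hy⟩ := by
  rw [subquotientEquivOfMapEq, LinearEquiv.trans_apply, LinearEquiv.trans_apply,
    LinearEquiv.symm_apply_eq, quotEquivMap_mk, quotEquivMap_mk]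
  exact congrArg Quotient.mk (Subtype.ext hxy.symm)

end SubquotientEquiv

end Submodule

open Submodule

section Filtration

variable {R M N : Type*} [Semiring R] [AddCommMonoid M] [Module R M] [AddCommMonoid N]
  [Module R N] {A B : M →ₗ[R] N} {F G : ℕ → Submodule R M}

theorem monotone_of_succ_eq_comap_map (h0 : F 0 = ⊥)
    (hs : ∀ k, F (k + 1) = comap A (map B (F k))) : Monotone F := by
  refine monotone_nat_of_le_succ fun k => ?_
  induction k with
  | zero => exact h0 ▸ bot_le
  | succ k ih => rw [hs, hs (k + 1)]; exact comap_mono (map_mono ih)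

theorem ker_le_of_succ_eq_comap_map (h0 : F 0 = ⊥)
    (hs : ∀ k, F (k + 1) = comap A (map B (F k))) (k : ℕ) : LinearMap.ker A ≤ F (k + 1) := by
  have hF1 : F 1 = LinearMap.ker A := by rw [hs, h0, Submodule.map_bot, comap_bot]
  exact hF1 ▸ monotone_of_succ_eq_comap_map h0 hs (Nat.le_add_left 1 k)

theorem map_succ_inf_eq_map_inf_succ (hFs : ∀ k, F (k + 1) = comap A (map B (F k)))
    (hGs : ∀ k, G (k + 1) = comap B (map A (G k))) (a b : ℕ) :
    map A (F (a + 1) ⊓ G b) = map B (F a ⊓ G (b + 1)) := by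
  rw [hFs, hGs, map_comap_inf, inf_comm (F a), map_comap_inf, inf_comm]

theorem sup_inf_pred_le_inf (hF : Monotone F) (hG : Monotone G) (i j : ℕ) :
    F (i - 1) ⊓ G j ⊔ F i ⊓ G (j - 1) ≤ F i ⊓ G j :=
  sup_le (inf_le_inf_right _ (hF (Nat.sub_le i 1))) (inf_le_inf_left _ (hG (Nat.sub_le j 1)))

end Filtration

theorem stmt_3_general (𝕜 X Y : Type*) [Field 𝕜] [AddCommGroup X] [Module 𝕜 X]
    [AddCommGroup Y] [Module 𝕜 Y]
    (A B : X →ₗ[𝕜] Y)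
    (F G : ℕ → Submodule 𝕜 X)
    (hF0 : F 0 = ⊥) (hFs : ∀ k, F (k + 1) = Submodule.comap A (Submodule.map B (F k)))
    (hG0 : G 0 = ⊥) (hGs : ∀ k, G (k + 1) = Submodule.comap B (Submodule.map A (G k)))
    (i j : ℕ) (hi : 2 ≤ i) (hj : 1 ≤ j) :
    (∀ x ∈ F i ⊓ G j, ∃ y ∈ F (i - 1) ⊓ G (j + 1), B y = A x) ∧
    ∃ e : Mquot 𝕜 X F G i j ≃ₗ[𝕜] Mquot 𝕜 X F G (i - 1) (j + 1),
      ∀ (x : X) (hx : x ∈ F i ⊓ G j) (y : X) (hy : y ∈ F (i - 1) ⊓ G (j + 1)),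
        B y = A x →
          e (Submodule.Quotient.mk ⟨x, hx⟩) = Submodule.Quotient.mk ⟨y, hy⟩ := by
  obtain ⟨a, rfl⟩ : ∃ a, i = a + 2 := ⟨i - 2, by omega⟩
  obtain ⟨b, rfl⟩ : ∃ b, j = b + 1 := ⟨j - 1, by omega⟩
  have hF := monotone_of_succ_eq_comap_map hF0 hFs
  have hG := monotone_of_succ_eq_comap_map hG0 hGs
  have hP := map_succ_inf_eq_map_inf_succ hFs hGs (a + 1) (b + 1)
  have hQ : map A (F (a + 1) ⊓ G (b + 1) ⊔ F (a + 2) ⊓ G b) =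
      map B (F a ⊓ G (b + 2) ⊔ F (a + 1) ⊓ G (b + 1)) := by
    rw [Submodule.map_sup, Submodule.map_sup, map_succ_inf_eq_map_inf_succ hFs hGs,
      map_succ_inf_eq_map_inf_succ hFs hGs]
  have hker : LinearMap.ker A ⊓ (F (a + 2) ⊓ G (b + 1)) ≤
      F (a + 1) ⊓ G (b + 1) ⊔ F (a + 2) ⊓ G b :=
    le_sup_of_le_left (inf_le_inf (ker_le_of_succ_eq_comap_map hF0 hFs a) inf_le_right)
  have hker' : LinearMap.ker B ⊓ (F (a + 1) ⊓ G (b + 2)) ≤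
      F a ⊓ G (b + 2) ⊔ F (a + 1) ⊓ G (b + 1) :=
    le_sup_of_le_right (le_inf (inf_le_right.trans inf_le_left)
      (inf_le_left.trans (ker_le_of_succ_eq_comap_map hG0 hGs b)))
  refine ⟨fun x hx => ?_, subquotientEquivOfMapEq (sup_inf_pred_le_inf hF hG _ _) hker
    (sup_inf_pred_le_inf hF hG _ _) hker' hP hQ, fun x hx y hy hxy => ?_⟩
  · obtain ⟨y, hy, hxy⟩ := hP ▸ mem_map_of_mem hx
    exact ⟨y, hy, hxy⟩
  · exact subquotientEquivOfMapEq_mk _ _ _ _ _ _ hx hy hxy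

/-- For surjective linear maps `A, B : X → Y` between finite-dimensional vector spaces,
with filtrations `F₀ = 0`, `F_{k+1} = A⁻¹(B(F_k))`, `G₀ = 0`, `G_{k+1} = B⁻¹(A(G_k))`,
for `i ≥ 2`, `j ≥ 1` there is a well-defined linear isomorphism
`M_{i,j} → M_{i-1,j+1}` sending the class of `x ∈ F_i ∩ G_j` to the class of any
`y ∈ F_{i-1} ∩ G_{j+1}` with `B y = A x`; such a `y` always exists. -/
theorem stmt_3 (𝕜 X Y : Type*) [Field 𝕜] [AddCommGroup X] [Module 𝕜 X]
    [AddCommGroup Y] [Module 𝕜 Y] [FiniteDimensional 𝕜 X] [FiniteDimensional 𝕜 Y]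
    (A B : X →ₗ[𝕜] Y) (hA : Function.Surjective A) (hB : Function.Surjective B)
    (F G : ℕ → Submodule 𝕜 X)
    (hF0 : F 0 = ⊥) (hFs : ∀ k, F (k + 1) = Submodule.comap A (Submodule.map B (F k)))
    (hG0 : G 0 = ⊥) (hGs : ∀ k, G (k + 1) = Submodule.comap B (Submodule.map A (G k)))
    (i j : ℕ) (hi : 2 ≤ i) (hj : 1 ≤ j) :
    (∀ x ∈ F i ⊓ G j, ∃ y ∈ F (i - 1) ⊓ G (j + 1), B y = A x) ∧
    ∃ e : Mquot 𝕜 X F G i j ≃ₗ[𝕜] Mquot 𝕜 X F G (i - 1) (j + 1),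
      ∀ (x : X) (hx : x ∈ F i ⊓ G j) (y : X) (hy : y ∈ F (i - 1) ⊓ G (j + 1)),
        B y = A x →
          e (Submodule.Quotient.mk ⟨x, hx⟩) = Submodule.Quotient.mk ⟨y, hy⟩ :=
  stmt_3_general 𝕜 X Y A B F G hF0 hFs hG0 hGs i j hi hj
end

section
/- Let Q be a finite quiver and R a set of composable pairs of arrows of Q (pairs (a,b) with the target of a equal to the source of b). Suppose that for every cyclic path a₁a₂⋯a_n in Q (with the target of a_i equal to the source of a_{i+1} for i taken mod n) there exists some i with (a_i, a_{i+1 mod n}) ∈ R. Then there exists an integer L such that every path in Q of length at least L contains a consecutive pair of arrows belonging to R. Consequently only finitely many paths avoid all relations in R. -/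
/-!
A path avoiding `R` cannot visit the same arrow twice: the stretch between two visits of an
arrow `a` is a cyclic path through `a` all of whose cyclically consecutive pairs avoid `R`,
which the hypothesis forbids. Hence such a path has pairwise distinct arrows, so its length
is at most the number of arrows of `Q`.
-/

namespace List

variable {α : Type*}

theorem exists_cons_append_singleton_infix_of_not_nodup {l : List α} (h : ¬ l.Nodup) :
    ∃ x c, x :: c ++ [x] <:+: l := by
  induction l with
  | nil => simp at h
  | cons a l ih =>
    by_cases ha : a ∈ l
    · obtain ⟨c, d, rfl⟩ := append_of_mem ha
      exact ⟨a, c, [], d, by simp⟩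
    · obtain ⟨x, c, hinfix⟩ := ih fun hl => h (hl.cons ha)
      exact ⟨x, c, hinfix.trans (suffix_cons a l).isInfix⟩

theorem isChain_and_iff {r s : α → α → Prop} {l : List α} :
    l.IsChain (fun a b => r a b ∧ s a b) ↔ l.IsChain r ∧ l.IsChain s := by
  induction l using twoStepInduction <;> simp_all [and_and_and_comm]

theorem Nodup.of_isChain {r : α → α → Prop} (hcyc : ∀ x c, ¬ (x :: c ++ [x]).IsChain r)
    {l : List α} (hl : l.IsChain r) : l.Nodup := by
  by_contra hdup
  obtain ⟨x, c, hinfix⟩ := exists_cons_append_singleton_infix_of_not_nodup hdup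
  exact hcyc x c (hl.infix hinfix)

end List

theorem stmt_5_general (Q0 Q1 : Type*) [Fintype Q1] (s t : Q1 → Q0)
    (R : Set (Q1 × Q1))
    (hcyc : ∀ (l : List Q1) (h : l ≠ []), l.Chain' (fun a b => t a = s b) →
      t (l.getLast h) = s (l.head h) →
      (¬ l.Chain' (fun a b => (a, b) ∉ R) ∨ (l.getLast h, l.head h) ∈ R)) :
    (∃ L : ℕ, ∀ l : List Q1, l.Chain' (fun a b => t a = s b) → L ≤ l.length →
      ¬ l.Chain' (fun a b => (a, b) ∉ R)) ∧
    {l : List Q1 | l.Chain' (fun a b => t a = s b) ∧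
      l.Chain' (fun a b => (a, b) ∉ R)}.Finite := by
  have no_admissible_cycle : ∀ x c,
      ¬ (x :: c ++ [x]).IsChain (fun a b => t a = s b ∧ (a, b) ∉ R) := by
    intro x c hchain
    have hwrap := hchain.rel_getLast_head_of_append (l₁ := x :: c) (l₂ := [x]) (by simp) (by simp)
    obtain ⟨hcomp, havoid⟩ := List.isChain_and_iff.mp hchain.left_of_append
    rcases hcyc (x :: c) (by simp) hcomp hwrap.1 with h | h
    exacts [h havoid, hwrap.2 h]
  have length_le : ∀ l : List Q1, l.IsChain (fun a b => t a = s b) →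
      l.IsChain (fun a b => (a, b) ∉ R) → l.length ≤ Fintype.card Q1 := fun l hcomp havoid =>
    (List.Nodup.of_isChain no_admissible_cycle
      (List.isChain_and_iff.mpr ⟨hcomp, havoid⟩)).length_le_card
  refine ⟨⟨Fintype.card Q1 + 1, fun l hcomp hlen havoid => ?_⟩,
    (List.finite_length_le Q1 (Fintype.card Q1)).subset fun l hl => length_le l hl.1 hl.2⟩
  have := length_le l hcomp havoid
  omega

/-- Let `Q` be a finite quiver (finite vertex set `Q0`, finite arrow set `Q1`, source
and target maps `s t : Q1 → Q0`) and `R` a set of composable pairs of arrows. Suppose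
every cyclic path in `Q` contains some (cyclically) consecutive pair of arrows in `R`.
Then there is `L` such that every path of length at least `L` contains a consecutive
pair of arrows in `R`; consequently only finitely many paths avoid all relations. -/
theorem stmt_5 (Q0 Q1 : Type*) [Fintype Q0] [Fintype Q1] (s t : Q1 → Q0)
    (R : Set (Q1 × Q1)) (hR : ∀ p ∈ R, t p.1 = s p.2)
    (hcyc : ∀ (l : List Q1) (h : l ≠ []), l.Chain' (fun a b => t a = s b) →
      t (l.getLast h) = s (l.head h) →
      (¬ l.Chain' (fun a b => (a, b) ∉ R) ∨ (l.getLast h, l.head h) ∈ R)) :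
    (∃ L : ℕ, ∀ l : List Q1, l.Chain' (fun a b => t a = s b) → L ≤ l.length →
      ¬ l.Chain' (fun a b => (a, b) ∉ R)) ∧
    {l : List Q1 | l.Chain' (fun a b => t a = s b) ∧
      l.Chain' (fun a b => (a, b) ∉ R)}.Finite :=
  stmt_5_general Q0 Q1 s t R hcyc
end

section
/- Fix a real number a > −1 and real numbers 0 < s ≤ r, and a point z₀ ∈ ℂ with |z₀| = r. Then the infimum, over all C¹ paths γ : [0,1] → ℂ ∖ {0} with γ(0) = z₀ and |γ(1)| = s, of the weighted length ∫₀¹ |γ(t)|^a |γ′(t)| dt, equals (r^{a+1} − s^{a+1})/(a+1). -/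
/-!
Since `t ↦ ‖γ t‖ ^ (a + 1) / (a + 1)` has derivative `‖γ t‖ ^ a * ⟪γ t, γ' t⟫ / ‖γ t‖`, which is
at least `-‖γ t‖ ^ a * ‖γ' t‖` by Cauchy–Schwarz, integrating over `[0, 1]` bounds the weighted
length from below by `(‖γ 0‖ ^ (a + 1) - ‖γ 1‖ ^ (a + 1)) / (a + 1)`. Along the radial segment from
`z₀` to `(s / r) • z₀` the Cauchy–Schwarz step is an equality, so the bound is attained.
-/

open Set
open scoped RealInnerProductSpace Interval

theorem integral_rpow_comp_mul_deriv {f f' : ℝ → ℝ} {x y a : ℝ} (hxy : x ≤ y) (ha : a ≠ -1)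
    (hf : ∀ t ∈ Icc x y, HasDerivWithinAt f (f' t) (Icc x y) t)
    (hf' : ContinuousOn f' (Icc x y)) (hpos : ∀ t ∈ Icc x y, 0 < f t) :
    ∫ t in x..y, f t ^ a * f' t = (f y ^ (a + 1) - f x ^ (a + 1)) / (a + 1) := by
  have hcont : ContinuousOn f (Icc x y) := fun t ht => (hf t ht).continuousWithinAt
  have hzero : (0 : ℝ) ∉ [[f x, f y]] := by
    rw [mem_uIcc]
    have := hpos x (left_mem_Icc.2 hxy)
    have := hpos y (right_mem_Icc.2 hxy)
    rintro (h | h) <;> linarith [h.1]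
  rw [← integral_rpow (Or.inr ⟨ha, hzero⟩)]
  refine intervalIntegral.integral_comp_mul_deriv'' (g := (· ^ a)) ?_ ?_ ?_ ?_ <;>
    simp only [uIcc_of_le hxy, min_eq_left hxy, max_eq_right hxy]
  · exact hcont
  · exact fun t ht => ((hf t (Ioo_subset_Icc_self ht)).hasDerivAt
      (Icc_mem_nhds ht.1 ht.2)).hasDerivWithinAt
  · exact hf'
  · rintro _ ⟨t, ht, rfl⟩
    exact (Real.continuousAt_rpow_const _ _ (Or.inl (hpos t ht).ne')).continuousWithinAt

section
variable {E : Type*} [NormedAddCommGroup E] [InnerProductSpace ℝ E]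

theorem HasDerivWithinAt.norm {f : ℝ → E} {f' : E} {s : Set ℝ} {x : ℝ}
    (hf : HasDerivWithinAt f f' s x) (h0 : f x ≠ 0) :
    HasDerivWithinAt (‖f ·‖) (⟪f x, f'⟫ / ‖f x‖) s x := by
  have h := hf.norm_sq.sqrt (by positivity)
  simp only [Real.sqrt_sq (norm_nonneg _)] at h
  convert h using 1
  field_simp

theorem sub_rpow_div_le_integral_norm_rpow_mul_norm_deriv {γ γ' : ℝ → E} {x y a : ℝ}
    (hxy : x ≤ y) (ha : a ≠ -1) (hγ : ∀ t ∈ Icc x y, HasDerivWithinAt γ (γ' t) (Icc x y) t)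
    (hγ' : ContinuousOn γ' (Icc x y)) (hne : ∀ t ∈ Icc x y, γ t ≠ 0) :
    (‖γ x‖ ^ (a + 1) - ‖γ y‖ ^ (a + 1)) / (a + 1) ≤ ∫ t in x..y, ‖γ t‖ ^ a * ‖γ' t‖ := by
  set ρ' : ℝ → ℝ := fun t => ⟪γ t, γ' t⟫ / ‖γ t‖
  have hγc : ContinuousOn γ (Icc x y) := fun t ht => (hγ t ht).continuousWithinAt
  have hnorm_ne : ∀ t ∈ Icc x y, ‖γ t‖ ≠ 0 := fun t ht => norm_ne_zero_iff.2 (hne t ht)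
  have hpow : ContinuousOn (fun t => ‖γ t‖ ^ a) (Icc x y) :=
    hγc.norm.rpow_const fun t ht => Or.inl (hnorm_ne t ht)
  have hρ' : ContinuousOn ρ' (Icc x y) := (hγc.inner hγ').div hγc.norm hnorm_ne
  have hρ'_le : ∀ t ∈ Icc x y, -ρ' t ≤ ‖γ' t‖ := fun t ht => by
    rw [← neg_div, div_le_iff₀ (norm_pos_iff.2 (hne t ht)), mul_comm]
    exact (neg_le_abs _).trans (abs_real_inner_le_norm _ _)
  have hFTC := integral_rpow_comp_mul_deriv hxy ha (fun t ht => (hγ t ht).norm (hne t ht)) hρ'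
    fun t ht => norm_pos_iff.2 (hne t ht)
  calc (‖γ x‖ ^ (a + 1) - ‖γ y‖ ^ (a + 1)) / (a + 1)
      = ∫ t in x..y, -(‖γ t‖ ^ a * ρ' t) := by rw [intervalIntegral.integral_neg, hFTC]; ring
    _ ≤ ∫ t in x..y, ‖γ t‖ ^ a * ‖γ' t‖ := by
      refine intervalIntegral.integral_mono_on hxy
        ((hpow.mul hρ').neg.intervalIntegrable_of_Icc hxy)
        ((hpow.mul hγ'.norm).intervalIntegrable_of_Icc hxy) fun t ht => ?_
      rw [← mul_neg]
      exact mul_le_mul_of_nonneg_left (hρ'_le t ht) (Real.rpow_nonneg (norm_nonneg _) a)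

end

theorem exists_radial_path_integral_norm_rpow_mul_norm_deriv_eq {E : Type*}
    [NormedAddCommGroup E] [NormedSpace ℝ E] {a r s : ℝ} {z₀ : E} (ha : a ≠ -1) (hs : 0 < s)
    (hsr : s ≤ r) (hz₀ : ‖z₀‖ = r) :
    ∃ γ γ' : ℝ → E, ContinuousOn γ' (Icc 0 1) ∧
      (∀ t ∈ Icc (0 : ℝ) 1, HasDerivWithinAt γ (γ' t) (Icc 0 1) t) ∧
      (∀ t ∈ Icc (0 : ℝ) 1, γ t ≠ 0) ∧ γ 0 = z₀ ∧ ‖γ 1‖ = s ∧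
      (r ^ (a + 1) - s ^ (a + 1)) / (a + 1) = ∫ t in (0 : ℝ)..1, ‖γ t‖ ^ a * ‖γ' t‖ := by
  have hr : 0 < r := hs.trans_le hsr
  set ρ : ℝ → ℝ := fun t => r - t * (r - s)
  have hρ : ∀ t ∈ Icc (0 : ℝ) 1, HasDerivWithinAt ρ (-(r - s)) (Icc 0 1) t := fun t _ => by
    simpa using ((hasDerivAt_id t).mul_const (r - s)).const_sub r |>.hasDerivWithinAt
  have hρ_pos : ∀ t ∈ Icc (0 : ℝ) 1, 0 < ρ t := fun t ht => by
    nlinarith [ht.2, mul_le_mul_of_nonneg_right ht.2 (sub_nonneg.2 hsr)]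
  have hnorm : ∀ t ∈ Icc (0 : ℝ) 1, ‖(ρ t / r) • z₀‖ = ρ t := fun t ht => by
    rw [norm_smul, hz₀, Real.norm_of_nonneg (div_pos (hρ_pos t ht) hr).le, div_mul_cancel₀ _ hr.ne']
  have hnorm' : ‖(-(r - s) / r) • z₀‖ = r - s := by
    rw [norm_smul, hz₀, norm_div, norm_neg, Real.norm_of_nonneg (sub_nonneg.2 hsr),
      Real.norm_of_nonneg hr.le, div_mul_cancel₀ _ hr.ne']
  refine ⟨fun t => (ρ t / r) • z₀, fun _ => (-(r - s) / r) • z₀, continuousOn_const,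
    fun t ht => ((hρ t ht).div_const r).smul_const z₀, fun t ht h => ?_, ?_, ?_, ?_⟩
  · exact (hρ_pos t ht).ne' (by simpa [h] using (hnorm t ht).symm)
  · simp [ρ, div_self hr.ne']
  · rw [hnorm 1 (right_mem_Icc.2 zero_le_one)]; simp [ρ]
  · have hFTC := integral_rpow_comp_mul_deriv zero_le_one ha hρ continuousOn_const hρ_pos
    rw [intervalIntegral.integral_congr (g := fun t => -(ρ t ^ a * -(r - s))) fun t ht => by
      rw [uIcc_of_le zero_le_one] at ht; simp only [hnorm t ht, hnorm', mul_neg, neg_neg],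
      intervalIntegral.integral_neg, hFTC]
    simp only [ρ]
    ring_nf

/-- Fix `a > −1`, `0 < s ≤ r`, `z₀ ∈ ℂ` with `|z₀| = r`. The infimum, over C¹ paths
`γ : [0,1] → ℂ ∖ {0}` with `γ(0) = z₀` and `|γ(1)| = s`, of the weighted length
`∫₀¹ |γ(t)|^a |γ′(t)| dt`, equals `(r^{a+1} − s^{a+1})/(a+1)`. -/
theorem stmt_12 (a r s : ℝ) (ha : -1 < a) (hs : 0 < s) (hsr : s ≤ r)
    (z₀ : ℂ) (hz₀ : ‖z₀‖ = r) :
    IsGLB {ℓ : ℝ | ∃ γ γ' : ℝ → ℂ,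
        ContinuousOn γ' (Set.Icc 0 1) ∧
        (∀ t ∈ Set.Icc (0 : ℝ) 1, HasDerivWithinAt γ (γ' t) (Set.Icc 0 1) t) ∧
        (∀ t ∈ Set.Icc (0 : ℝ) 1, γ t ≠ 0) ∧
        γ 0 = z₀ ∧ ‖γ 1‖ = s ∧
        ℓ = ∫ t in (0 : ℝ)..1, ‖γ t‖ ^ a * ‖γ' t‖}
      ((r ^ (a + 1) - s ^ (a + 1)) / (a + 1)) := by
  refine IsLeast.isGLB
    ⟨exists_radial_path_integral_norm_rpow_mul_norm_deriv_eq ha.ne' hs hsr hz₀, ?_⟩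
  rintro _ ⟨γ, γ', hγ', hγ, hne, rfl, rfl, rfl⟩
  rw [← hz₀]
  exact sub_rpow_div_le_integral_norm_rpow_mul_norm_deriv zero_le_one ha.ne' hγ hγ' hne
end
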